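/- For every n ≥ 1, the map ℂ^n → ℂ^n sending (z₁, ..., zₙ) to the tuple (e₁(z), ..., eₙ(z)) of its elementary symmetric polynomials (equivalently, to the non-leading coefficients of the monic polynomial ∏ᵢ (X − zᵢ)) is invariant under permutation of the zᵢ and descends to a homeomorphism SP^n(ℂ) ≃ ℂ^n between the n-th symmetric product of the complex plane and ℂ^n = (Fin n → ℂ). -/

import Mathlib

/-- The setoid on `Fin n → X` whose classes are orbits of the permutation action
of `Equiv.Perm (Fin n)`. -/
def SPSetoid (n : ℕ) (X : Type*) : Setoid (Fin n → X) where
  r f g := ∃ σ : Equiv.Perm (Fin n), f ∘ σ = g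
  iseqv := by
    constructor
    · exact fun f => ⟨Equiv.refl _, rfl⟩
    · rintro f g ⟨σ, rfl⟩
      exact ⟨σ.symm, by funext i; simp⟩
    · rintro f g h ⟨σ, rfl⟩ ⟨τ, rfl⟩
      exact ⟨τ.trans σ, by funext i; simp⟩

/-- The `n`-th symmetric product `SP^n(X) = X^n / S_n`, with the quotient topology. -/
def SP (n : ℕ) (X : Type*) [TopologicalSpace X] : Type _ :=
  Quotient (SPSetoid n X)

instance (n : ℕ) (X : Type*) [TopologicalSpace X] : TopologicalSpace (SP n X) :=
  inferInstanceAs (TopologicalSpace (Quotient (SPSetoid n X)))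


/-! The elementary symmetric functions of `z` are, up to sign, the coefficients of `∏ᵢ (X - zᵢ)`.
A monic polynomial over a domain determines its multiset of roots, and over an algebraically
closed field every monic polynomial of degree `n` has `n` roots; so `z ↦ (e₁(z), …, eₙ(z))`
descends to a continuous bijection `SP^n(ℂ) → ℂ^n`. It is closed because, by Cauchy's bound
`‖zᵢ‖ < 1 + maxₖ ‖eₖ(z)‖`, the map upstairs is proper. -/

open Polynomial

theorem MvPolynomial.IsSymmetric.eval_comp_perm {σ R : Type*} [CommSemiring R]
    {φ : MvPolynomial σ R} (hφ : φ.IsSymmetric) (z : σ → R) (e : Equiv.Perm σ) :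
    MvPolynomial.eval (z ∘ e) φ = MvPolynomial.eval z φ := by
  rw [← MvPolynomial.eval_rename, hφ e]

theorem Multiset.eq_of_card_eq_of_esymm_eq {R : Type*} [CommRing R] [IsDomain R]
    {s t : Multiset R} (hcard : card s = card t)
    (h : ∀ j, 1 ≤ j → j ≤ card s → s.esymm j = t.esymm j) : s = t := by
  have hprod : (s.map fun r => X - C r).prod = (t.map fun r => X - C r).prod := by
    rw [prod_X_sub_X_eq_sum_esymm, prod_X_sub_X_eq_sum_esymm, ← hcard]
    refine Finset.sum_congr rfl fun j hj => ?_
    rcases Nat.eq_zero_or_pos j with rfl | hj0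
    · simp [Multiset.esymm]
    · rw [h j hj0 (Nat.lt_succ_iff.mp (Finset.mem_range.mp hj))]
  rw [← roots_multiset_prod_X_sub_C s, hprod, roots_multiset_prod_X_sub_C]

theorem Fintype.exists_perm_comp_eq_of_map_univ_eq {ι α : Type*} [Fintype ι] [DecidableEq α]
    {f g : ι → α} (h : Finset.univ.val.map f = Finset.univ.val.map g) :
    ∃ σ : Equiv.Perm ι, f ∘ σ = g := by
  have hfiber : ∀ a, Fintype.card {i // g i = a} = Fintype.card {i // f i = a} := by
    intro a
    have := congrArg (Multiset.count a) h.symm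
    simp only [Multiset.count_map] at this
    simpa [Fintype.card_subtype, Finset.card_def, Finset.filter_val, eq_comm] using this
  exact ⟨Equiv.ofFiberEquiv fun a => Fintype.equivOfCardEq (hfiber a),
    funext (Equiv.ofFiberEquiv_map _)⟩

theorem Multiset.exists_fin_map_univ_eq {α : Type*} {n : ℕ} {s : Multiset α}
    (hs : card s = n) : ∃ z : Fin n → α, Finset.univ.val.map z = s := by
  obtain ⟨l, rfl⟩ : ∃ l : List α, (l : Multiset α) = s := ⟨s.toList, s.coe_toList⟩
  obtain rfl : l.length = n := hs
  exact ⟨l.get, by rw [Fin.univ_val_map, List.ofFn_get]⟩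

theorem Polynomial.coeff_X_pow_add_sum_fin {R : Type*} [Semiring R] {n : ℕ} (b : Fin n → R)
    (i : Fin n) : (X ^ n + ∑ j : Fin n, C (b j) * X ^ (j : ℕ)).coeff i = b i := by
  simp [coeff_X_pow, coeff_C_mul, Fin.val_inj, i.isLt.ne]

theorem Polynomial.natDegree_X_pow_add_sum_fin {R : Type*} [Semiring R] [Nontrivial R] {n : ℕ}
    (b : Fin n → R) : (X ^ n + ∑ j : Fin n, C (b j) * X ^ (j : ℕ)).natDegree = n :=
  natDegree_eq_of_degree_eq_some <| by
    rw [degree_add_eq_left_of_degree_lt (by rw [degree_X_pow]; exact degree_sum_fin_lt b),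
      degree_X_pow]

theorem Multiset.exists_card_eq_and_esymm_eq {K : Type*} [Field K] [IsAlgClosed K] {n : ℕ}
    (c : Fin n → K) : ∃ s : Multiset K, card s = n ∧ ∀ k : Fin n, s.esymm (k + 1) = c k := by
  -- its coefficient of `X ^ (n - k - 1)` is `(-1) ^ (k + 1) * c k`, as Vieta's formulas demand
  set p : K[X] := X ^ n + ∑ j : Fin n, C ((-1) ^ (n - j : ℕ) * c j.rev) * X ^ (j : ℕ)
  have hmonic : p.Monic := monic_X_pow_add (degree_sum_fin_lt _)
  have hdeg : p.natDegree = n := natDegree_X_pow_add_sum_fin _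
  have hroots : card p.roots = n := by
    rw [splits_iff_card_roots.mp (IsAlgClosed.splits p), hdeg]
  refine ⟨p.roots, hroots, fun k => ?_⟩
  have hcoeff := coeff_eq_esymm_roots_of_card (hroots.trans hdeg.symm) (k := k.rev)
    (by rw [hdeg]; exact k.rev.isLt.le)
  rw [coeff_X_pow_add_sum_fin, hmonic.leadingCoeff, hdeg, one_mul, Fin.rev_rev,
    show n - (k.rev : ℕ) = k + 1 by rw [Fin.val_rev]; omega] at hcoeff
  exact (mul_left_cancel₀ (pow_ne_zero _ (neg_ne_zero.mpr one_ne_zero)) hcoeff).symm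

open NNReal in
theorem Multiset.nnnorm_lt_of_mem_of_nnnorm_esymm_le {K : Type*} [NormedField K]
    {s : Multiset K} {a : K} (ha : a ∈ s) {B : ℝ≥0}
    (hB : ∀ j, 1 ≤ j → j ≤ card s → ‖s.esymm j‖₊ ≤ B) : ‖a‖₊ < B + 1 := by
  set p : K[X] := (s.map fun r => X - C r).prod
  have hmonic : p.Monic := monic_multiset_prod_of_monic _ _ fun r _ => monic_X_sub_C r
  have hroot : p.IsRoot a :=
    (mem_roots hmonic.ne_zero).mp (by rwa [roots_multiset_prod_X_sub_C])
  refine (hroot.norm_lt_cauchyBound hmonic.ne_zero).trans_le ?_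
  rw [cauchyBound, hmonic.leadingCoeff, nnnorm_one, div_one,
    natDegree_multiset_prod_X_sub_C_eq_card]
  gcongr
  refine Finset.sup_le fun k hk => ?_
  have hk := Finset.mem_range.mp hk
  rw [prod_X_sub_C_coeff s hk.le, nnnorm_mul, nnnorm_pow, nnnorm_neg, nnnorm_one, one_pow,
    one_mul]
  exact hB _ (by omega) (by omega)

section Vieta

variable {R : Type*} {n : ℕ}

noncomputable def vieta [CommSemiring R] (z : Fin n → R) : Fin n → R :=
  fun k => MvPolynomial.eval z (MvPolynomial.esymm (Fin n) R (k + 1))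

theorem vieta_comp_perm [CommSemiring R] (z : Fin n → R) (σ : Equiv.Perm (Fin n)) :
    vieta (z ∘ σ) = vieta z :=
  funext fun _ => (MvPolynomial.esymm_isSymmetric _ _ _).eval_comp_perm z σ

theorem vieta_apply [CommSemiring R] (z : Fin n → R) (k : Fin n) :
    vieta z k = (Finset.univ.val.map z).esymm (k + 1) :=
  MvPolynomial.aeval_esymm_eq_multiset_esymm _ _ _ _

theorem esymm_map_univ_eq_vieta [CommSemiring R] (z : Fin n → R) {j : ℕ} (h1 : 1 ≤ j)
    (hj : j ≤ n) : (Finset.univ.val.map z).esymm j = vieta z ⟨j - 1, by omega⟩ := by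
  rw [vieta_apply, Nat.sub_add_cancel h1]

theorem continuous_vieta [CommSemiring R] [TopologicalSpace R] [IsTopologicalSemiring R] :
    Continuous (vieta : (Fin n → R) → Fin n → R) :=
  continuous_pi fun _ => MvPolynomial.continuous_eval _

theorem exists_perm_comp_eq_of_vieta_eq [CommRing R] [IsDomain R] {z w : Fin n → R}
    (h : vieta z = vieta w) : ∃ σ : Equiv.Perm (Fin n), z ∘ σ = w := by
  classical
  refine Fintype.exists_perm_comp_eq_of_map_univ_eq (Multiset.eq_of_card_eq_of_esymm_eq
    (by simp) fun j h1 hj => ?_)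
  simp only [Multiset.card_map, Finset.card_val, Finset.card_univ, Fintype.card_fin] at hj
  rw [esymm_map_univ_eq_vieta z h1 hj, esymm_map_univ_eq_vieta w h1 hj, h]

theorem vieta_surjective [Field R] [IsAlgClosed R] :
    Function.Surjective (vieta : (Fin n → R) → Fin n → R) := by
  intro c
  obtain ⟨s, hcard, hs⟩ := Multiset.exists_card_eq_and_esymm_eq c
  obtain ⟨z, rfl⟩ := Multiset.exists_fin_map_univ_eq hcard
  exact ⟨z, funext fun k => (vieta_apply z k).trans (hs k)⟩

theorem norm_le_norm_vieta_add_one [NormedField R] (z : Fin n → R) : ‖z‖ ≤ ‖vieta z‖ + 1 := by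
  refine (pi_norm_le_iff_of_nonneg (by positivity)).mpr fun i => ?_
  have hmem : z i ∈ Finset.univ.val.map z := Multiset.mem_map_of_mem z (Finset.mem_univ_val i)
  refine le_of_lt (Multiset.nnnorm_lt_of_mem_of_nnnorm_esymm_le hmem fun j h1 hj => ?_)
  simp only [Multiset.card_map, Finset.card_val, Finset.card_univ, Fintype.card_fin] at hj
  rw [esymm_map_univ_eq_vieta z h1 hj]
  exact nnnorm_le_pi_nnnorm _ _

theorem isProperMap_vieta [NormedField R] [ProperSpace R] :
    IsProperMap (vieta : (Fin n → R) → Fin n → R) := by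
  refine isProperMap_iff_tendsto_cocompact.mpr ⟨continuous_vieta, ?_⟩
  rw [← Metric.cobounded_eq_cocompact, ← tendsto_norm_atTop_iff_cobounded]
  exact Filter.tendsto_atTop_mono (fun z => by linarith [norm_le_norm_vieta_add_one z])
    (Filter.tendsto_atTop_add_const_right _ (-1) tendsto_norm_cobounded_atTop)

end Vieta

namespace SP

variable {n : ℕ} {R : Type*}

noncomputable def vieta [CommSemiring R] [TopologicalSpace R] : SP n R → Fin n → R :=
  Quotient.lift _root_.vieta fun _ _ ⟨σ, h⟩ => h ▸ (vieta_comp_perm _ σ).symm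

theorem continuous_vieta [CommSemiring R] [TopologicalSpace R] [IsTopologicalSemiring R] :
    Continuous (vieta : SP n R → Fin n → R) :=
  _root_.continuous_vieta.quotient_lift _

theorem vieta_bijective [Field R] [IsAlgClosed R] [TopologicalSpace R] :
    Function.Bijective (vieta : SP n R → Fin n → R) := by
  refine ⟨?_, fun c => ?_⟩
  · rintro ⟨z⟩ ⟨w⟩ h
    exact Quotient.sound (exists_perm_comp_eq_of_vieta_eq h)
  · obtain ⟨z, hz⟩ := vieta_surjective c
    exact ⟨Quotient.mk _ z, hz⟩

theorem isClosedMap_vieta [NormedField R] [ProperSpace R] :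
    IsClosedMap (vieta : SP n R → Fin n → R) :=
  IsClosedMap.of_comp_surjective Quotient.mk_surjective continuous_quotient_mk'
    isProperMap_vieta.isClosedMap

noncomputable def vietaHomeomorph (n : ℕ) (K : Type*) [NormedField K] [ProperSpace K]
    [IsAlgClosed K] : SP n K ≃ₜ (Fin n → K) :=
  (Equiv.ofBijective vieta vieta_bijective).toHomeomorphOfContinuousClosed continuous_vieta
    isClosedMap_vieta

end SP

theorem SP_complex_homeomorph_general (n : ℕ) :
    (∀ (z : Fin n → ℂ) (σ : Equiv.Perm (Fin n)) (k : Fin n),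
        MvPolynomial.eval (z ∘ σ) (MvPolynomial.esymm (Fin n) ℂ (k + 1)) =
          MvPolynomial.eval z (MvPolynomial.esymm (Fin n) ℂ (k + 1))) ∧
    ∃ h : SP n ℂ ≃ₜ (Fin n → ℂ),
      ∀ z : Fin n → ℂ,
        h (Quotient.mk (SPSetoid n ℂ) z) =
          fun k : Fin n => MvPolynomial.eval z (MvPolynomial.esymm (Fin n) ℂ (k + 1)) :=
  ⟨fun z σ k => congrFun (vieta_comp_perm z σ) k, SP.vietaHomeomorph n ℂ, fun _ => rfl⟩

/-- The map sending `(z₁, …, zₙ)` to its elementary symmetric polynomials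
`(e₁(z), …, eₙ(z))` is permutation invariant and descends to a homeomorphism
`SP^n(ℂ) ≃ ℂ^n`. -/
theorem SP_complex_homeomorph (n : ℕ) (hn : 1 ≤ n) :
    (∀ (z : Fin n → ℂ) (σ : Equiv.Perm (Fin n)) (k : Fin n),
        MvPolynomial.eval (z ∘ σ) (MvPolynomial.esymm (Fin n) ℂ (k + 1)) =
          MvPolynomial.eval z (MvPolynomial.esymm (Fin n) ℂ (k + 1))) ∧
    ∃ h : SP n ℂ ≃ₜ (Fin n → ℂ),
      ∀ z : Fin n → ℂ,
        h (Quotient.mk (SPSetoid n ℂ) z) =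
          fun k : Fin n => MvPolynomial.eval z (MvPolynomial.esymm (Fin n) ℂ (k + 1)) :=
  SP_complex_homeomorph_general n
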